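/- Let 0 < α ≤ 1 and S ⊆ F_2^n with |S| ≥ α·2^n. Then S contains a rainbow subset of size Ω(α^{1/2} n^{1/2}): there exists R ⊆ S with all pairwise Hamming distances distinct and |R| ≥ c·√(αn) for an absolute constant c > 0. -/

import Mathlib

/-!
Averaging over `t`, some translate `xₖ + t` of the standard maximal chain `x₀, …, xₙ` of `𝔽₂ⁿ`
(`xₖ` is the indicator of the first `k` coordinates) lies in `S` for all `k` in a set
`A ⊆ [0, n]` with `|A| ≥ α (n + 1)`. As `d(xₖ + t, xₗ + t) = |k - l|`, a Sidon subset of `A`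
indexes a rainbow subset of `S`.

A Sidon subset of size `≳ √|A|` is the Komlós–Sulyok–Szemerédi theorem. Take primes `p ≍ √|A|` and
`Q > max A`. For `ω = (l, t) ∈ (ℤ/Q)²` the map `a ↦ ⌊p · (la + t mod Q) / Q⌋` is a Freiman
`2`-homomorphism into `ℤ/p` on the elements `a` whose rounding has fractional part `< 1/2`; these
are half of `A` on average. For two independent `ω` the pair of maps keeps a quarter of `A` on
average, while a pair `a < a'` collides under both with probability `≲ 1/p²`. Deleting one point of
every collision leaves a set of size `≳ |A|` on which the pair of maps is an injective Freiman
`2`-homomorphism into `(ℤ/p)²`. Some parabola `y = x² + cx + e`, a Sidon set of `(ℤ/p)²`, contains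
the image of a `1/p` fraction of it, and this fraction is a Sidon set.
-/

open Finset

/-- A set is rainbow if all pairwise Hamming distances among distinct points are
distinct. -/
def IsRainbow {α : Type*} [DecidableEq α] {n : ℕ} (R : Finset (Fin n → α)) : Prop :=
  ∀ x ∈ R, ∀ y ∈ R, ∀ u ∈ R, ∀ v ∈ R, x ≠ y → u ≠ v →
    hammingDist x y = hammingDist u v → ({x, y} : Finset (Fin n → α)) = {u, v}

def IsSidon {G : Type*} [Add G] (s : Set G) : Prop :=
  ∀ ⦃a⦄, a ∈ s → ∀ ⦃b⦄, b ∈ s → ∀ ⦃c⦄, c ∈ s → ∀ ⦃d⦄, d ∈ s →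
    a + b = c + d → a = c ∧ b = d ∨ a = d ∧ b = c

lemma IsSidon.of_isAddFreimanHom {α G : Type*} [AddCommMonoid α] [AddCommMonoid G]
    {A : Set α} {B : Set G} {f : α → G} (hB : IsSidon B) (hf : IsAddFreimanHom 2 A B f)
    (hinj : Set.InjOn f A) : IsSidon A := by
  intro a ha b hb c hc d hd h
  rcases hB (hf.mapsTo ha) (hf.mapsTo hb) (hf.mapsTo hc) (hf.mapsTo hd)
    (hf.add_eq_add ha hb hc hd h) with ⟨hac, hbd⟩ | ⟨had, hbc⟩
  · exact .inl ⟨hinj ha hc hac, hinj hb hd hbd⟩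
  · exact .inr ⟨hinj ha hd had, hinj hb hc hbc⟩

lemma exists_card_mul_le_card_mul_card_filter {ι Ω : Type*} [Fintype Ω] [Nonempty Ω]
    (s : Finset ι) (P : Ω → ι → Prop) [∀ ω i, Decidable (P ω i)] {k : ℕ}
    (hk : ∀ i ∈ s, k ≤ #{ω | P ω i}) :
    ∃ ω, #s * k ≤ Fintype.card Ω * #{i ∈ s | P ω i} := by
  have hsum : #s * k ≤ ∑ ω, #{i ∈ s | P ω i} := by
    simp only [card_filter]
    rw [sum_comm, ← smul_eq_mul, ← sum_const]
    exact sum_le_sum fun i hi => by simpa only [card_filter] using hk i hi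
  obtain ⟨ω, -, hω⟩ := exists_le_of_sum_le (s := univ) (f := fun _ => #s * k)
    (g := fun ω => Fintype.card Ω * #{i ∈ s | P ω i}) univ_nonempty
    (by simpa only [sum_const, card_univ, smul_eq_mul, ← mul_sum] using
      Nat.mul_le_mul_left (Fintype.card Ω) hsum)
  exact ⟨ω, hω⟩

lemma sum_sum_card_filter_and {ι Ω : Type*} [Fintype Ω] (s : Finset ι) (P : Ω → ι → Prop)
    [∀ ω i, Decidable (P ω i)] :
    ∑ ω₁ : Ω, ∑ ω₂ : Ω, #{i ∈ s | P ω₁ i ∧ P ω₂ i} = ∑ i ∈ s, #{ω | P ω i} ^ 2 := by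
  have hcard (ω₁ ω₂ : Ω) : #{i ∈ s | P ω₁ i ∧ P ω₂ i}
      = ∑ i ∈ s, (if P ω₁ i then 1 else 0) * (if P ω₂ i then (1 : ℕ) else 0) := by
    rw [card_filter]
    exact sum_congr rfl fun i _ => by split_ifs <;> simp_all
  simp only [hcard, sq, card_filter, sum_mul_sum]
  exact (sum_congr rfl fun _ _ => sum_comm).trans sum_comm

lemma exists_subset_injOn_card_le {α β : Type*} [LinearOrder α] [DecidableEq β]
    (s : Finset α) (f : α → β) :
    ∃ W ⊆ s, Set.InjOn f W ∧ #s ≤ #W + #{q ∈ s ×ˢ s | q.1 < q.2 ∧ f q.1 = f q.2} := by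
  refine ⟨{a ∈ s | ∀ b ∈ s, f b = f a → a ≤ b}, filter_subset _ _, ?_, ?_⟩
  · intro a ha b hb hab
    simp only [coe_filter, Set.mem_ofPred_eq] at ha hb
    exact le_antisymm (ha.2 b hb.1 hab.symm) (hb.2 a ha.1 hab)
  · rw [← card_filter_add_card_filter_not (s := s) (fun a => ∀ b ∈ s, f b = f a → a ≤ b)]
    refine Nat.add_le_add_left ((card_le_card ?_).trans (card_image_le (f := Prod.snd))) _
    intro a ha
    simp only [mem_filter, not_forall, not_le] at ha
    obtain ⟨has, b, hb, hfb, hba⟩ := ha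
    exact mem_image.2 ⟨(b, a), mem_filter.2 ⟨mem_product.2 ⟨hb, has⟩, hba, hfb⟩, rfl⟩

def parabola {K : Type*} [Field K] (c e : K) : Set (K × K) := {q | q.2 = q.1 ^ 2 + c * q.1 + e}

instance {K : Type*} [Field K] [DecidableEq K] (c e : K) : DecidablePred (· ∈ parabola c e) :=
  fun q => inferInstanceAs (Decidable (q.2 = q.1 ^ 2 + c * q.1 + e))

lemma isSidon_parabola {K : Type*} [Field K] (h2 : (2 : K) ≠ 0) (c e : K) :
    IsSidon (parabola c e) := by
  rintro ⟨a₁, a₂⟩ ha ⟨b₁, b₂⟩ hb ⟨c₁, c₂⟩ hc ⟨d₁, d₂⟩ hd h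
  simp only [parabola, Set.mem_ofPred_eq] at ha hb hc hd
  simp only [Prod.mk_add_mk, Prod.mk.injEq] at h ⊢
  obtain ⟨h₁, h₂⟩ := h
  have hb₁ : b₁ = c₁ + d₁ - a₁ := by linear_combination h₁
  have key : 2 * ((a₁ - c₁) * (a₁ - d₁)) = 0 := by
    subst hb₁
    linear_combination h₂ - ha - hb + hc + hd
  rcases mul_eq_zero.1 ((mul_eq_zero.1 key).resolve_left h2) with hac | had
  · have hac : a₁ = c₁ := sub_eq_zero.1 hac
    subst hac
    have hbd : b₁ = d₁ := by linear_combination hb₁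
    subst hbd
    exact .inl ⟨⟨rfl, ha.trans hc.symm⟩, rfl, hb.trans hd.symm⟩
  · have had : a₁ = d₁ := sub_eq_zero.1 had
    subst had
    have hbc : b₁ = c₁ := by linear_combination hb₁
    subst hbc
    exact .inr ⟨⟨rfl, ha.trans hd.symm⟩, rfl, hb.trans hc.symm⟩

lemma card_filter_mem_parabola {K : Type*} [Field K] [Fintype K] [DecidableEq K] (q : K × K) :
    #{ce : K × K | q ∈ parabola ce.1 ce.2} = Fintype.card K := by
  rw [← card_univ]
  refine card_nbij' (fun ce => ce.1) (fun c => (c, q.2 - q.1 ^ 2 - c * q.1)) ?_ ?_ ?_ ?_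
    <;> intro _ <;> simp [parabola] <;> grind

lemma exists_card_le_card_filter_mem_parabola {ι K : Type*} [Field K] [Fintype K] [DecidableEq K]
    (W : Finset ι) (f : ι → K × K) :
    ∃ c e : K, #W ≤ Fintype.card K * #{a ∈ W | f a ∈ parabola c e} := by
  obtain ⟨⟨c, e⟩, h⟩ := exists_card_mul_le_card_mul_card_filter W
    (fun (ce : K × K) a => f a ∈ parabola ce.1 ce.2) fun a _ => (card_filter_mem_parabola (f a)).ge
  refine ⟨c, e, Nat.le_of_mul_le_mul_right ?_ (Fintype.card_pos (α := K))⟩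
  rw [Fintype.card_prod] at h
  linarith

lemma exists_isSidon_subset_of_isAddFreimanHom {α K : Type*} [AddCommMonoid α] [Field K]
    [Fintype K] [DecidableEq K] (h2 : (2 : K) ≠ 0) {W : Finset α} {f : α → K × K}
    (hf : IsAddFreimanHom 2 (W : Set α) Set.univ f) (hinj : Set.InjOn f W) :
    ∃ Z ⊆ W, IsSidon (Z : Set α) ∧ #W ≤ Fintype.card K * #Z := by
  obtain ⟨c, e, hce⟩ := exists_card_le_card_filter_mem_parabola W f
  refine ⟨{a ∈ W | f a ∈ parabola c e}, filter_subset _ _, ?_, hce⟩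
  have hZW : (({a ∈ W | f a ∈ parabola c e} : Finset α) : Set α) ⊆ W :=
    coe_subset.2 (filter_subset _ _)
  exact (isSidon_parabola h2 c e).of_isAddFreimanHom
    (hf.subset hZW fun a ha => (mem_filter.1 ha).2) (hinj.mono hZW)

lemma card_filter_affine {R : Type*} [Ring R] [Fintype R] (P : R → Prop) [DecidablePred P]
    (a : R) : #{ω : R × R | P (ω.1 * a + ω.2)} = Fintype.card R * #{y | P y} := by
  have hl (l : R) : ∑ t, (if P (l * a + t) then (1 : ℕ) else 0) = #{y | P y} := by
    rw [card_filter]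
    exact Equiv.sum_comp (Equiv.addLeft (l * a)) fun y => if P y then 1 else 0
  rw [card_filter, Fintype.sum_prod_type]
  simp only [hl, sum_const, card_univ, smul_eq_mul]

lemma ZMod.val_mul_natCast {Q : ℕ} [NeZero Q] (y : ZMod Q) (M : ℕ) :
    (y * M).val = y.val * M % Q := by
  rw [ZMod.val_mul, ZMod.val_natCast, Nat.mul_mod_mod]

section Bucket

variable {Q : ℕ} (M : ℕ)

def bucket (y : ZMod Q) : ℕ := y.val * M / Q

def InLowerHalf (y : ZMod Q) : Prop := 2 * (y.val * M % Q) < Q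

instance : DecidablePred (InLowerHalf (Q := Q) M) := fun _ => Nat.decLt _ _

variable {M}

lemma bucket_lt [NeZero Q] (hM : 0 < M) (y : ZMod Q) : bucket M y < M := by
  rw [bucket, Nat.div_lt_iff_lt_mul (NeZero.pos Q), mul_comm M]
  exact Nat.mul_lt_mul_of_pos_right (ZMod.val_lt y) hM

lemma bucket_add_bucket_modEq [NeZero Q] {y₁ y₂ y₃ y₄ : ZMod Q} (h : y₁ + y₂ = y₃ + y₄)
    (h₁ : InLowerHalf M y₁) (h₂ : InLowerHalf M y₂) (h₃ : InLowerHalf M y₃)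
    (h₄ : InLowerHalf M y₄) :
    bucket M y₁ + bucket M y₂ ≡ bucket M y₃ + bucket M y₄ [MOD M] := by
  have hval : ((y₁.val + y₂.val : ℕ) : ZMod Q) = ((y₃.val + y₄.val : ℕ) : ZMod Q) := by
    simpa using h
  obtain ⟨k, hk⟩ := Nat.modEq_iff_dvd.1 ((ZMod.natCast_eq_natCast_iff _ _ _).1 hval)
  have e₁ := Nat.div_add_mod (y₁.val * M) Q
  have e₂ := Nat.div_add_mod (y₂.val * M) Q
  have e₃ := Nat.div_add_mod (y₃.val * M) Q
  have e₄ := Nat.div_add_mod (y₄.val * M) Q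
  unfold InLowerHalf at h₁ h₂ h₃ h₄
  rw [Nat.modEq_iff_dvd]
  unfold bucket
  set b₁ := y₁.val * M / Q
  set b₂ := y₂.val * M / Q
  set b₃ := y₃.val * M / Q
  set b₄ := y₄.val * M / Q
  set r₁ := y₁.val * M % Q
  set r₂ := y₂.val * M % Q
  set r₃ := y₃.val * M % Q
  set r₄ := y₄.val * M % Q
  -- The remainders lie in `[0, Q / 2)`, so the carry `r₃ + r₄ - r₁ - r₂`, a multiple of `Q`, is `0`.
  have hr : ((r₃ + r₄ : ℕ) : ℤ) - (r₁ + r₂ : ℕ)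
      = Q * (M * k - ((b₃ + b₄ : ℕ) - (b₁ + b₂ : ℕ))) := by
    zify at e₁ e₂ e₃ e₄
    push_cast at hk ⊢
    linear_combination e₃ + e₄ - e₁ - e₂ + (M : ℤ) * hk
  have hr0 := Int.eq_zero_of_abs_lt_dvd ⟨_, hr⟩ (by rw [abs_lt]; push_cast; omega)
  refine ⟨k, ?_⟩
  have hQ : (Q : ℤ) ≠ 0 := by exact_mod_cast NeZero.ne Q
  have hb := mul_left_cancel₀ hQ (hr.symm.trans hr0 |>.trans (mul_zero _).symm)
  push_cast at hb ⊢
  linear_combination -hb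

lemma le_two_mul_card_inLowerHalf [Fact Q.Prime] (hM : (M : ZMod Q) ≠ 0) :
    Q ≤ 2 * #{y : ZMod Q | InLowerHalf M y} := by
  have : #(range ((Q + 1) / 2)) ≤ #{y : ZMod Q | InLowerHalf M y} := by
    refine card_le_card_of_injOn (fun x => (x : ZMod Q) * (M : ZMod Q)⁻¹) ?_ ?_
    · intro x hx
      simp only [coe_range, Set.mem_Iio] at hx
      rw [mem_coe, mem_filter, InLowerHalf]
      refine ⟨mem_univ _, ?_⟩
      rw [← ZMod.val_mul_natCast, inv_mul_cancel_right₀ hM, ZMod.val_cast_of_lt (by omega)]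
      omega
    · intro x hx x' hx' h
      simp only [coe_range, Set.mem_Iio] at hx hx'
      have := congrArg ZMod.val (mul_right_cancel₀ (inv_ne_zero hM) h)
      rwa [ZMod.val_cast_of_lt (by omega), ZMod.val_cast_of_lt (by omega)] at this
  rw [card_range] at this
  omega

lemma mul_card_bucket_eq_le [NeZero Q] (hM : 0 < M) (hMQ : M ≤ Q) (b : ℕ) :
    M * #{y : ZMod Q | bucket M y = b} ≤ 2 * Q := by
  set F := ({y : ZMod Q | bucket M y = b} : Finset (ZMod Q))
  rcases F.eq_empty_or_nonempty with hF | hF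
  · simp [hF]
  obtain ⟨u, hu, hmin⟩ := F.exists_min_image ZMod.val hF
  have hsub : F.image ZMod.val ⊆ Ico u.val (u.val + (Q / M + 1)) := by
    simp only [subset_iff, mem_image, mem_Ico]
    rintro _ ⟨v, hv, rfl⟩
    have huv := hmin v hv
    simp only [F, mem_filter, mem_univ, true_and] at hu hv
    have e₁ : Q * b + u.val * M % Q = u.val * M := hu ▸ Nat.div_add_mod _ _
    have e₂ : Q * b + v.val * M % Q = v.val * M := hv ▸ Nat.div_add_mod _ _
    have := Nat.mod_lt (v.val * M) (NeZero.pos Q)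
    have hvu : (v.val - u.val) * M ≤ Q := by rw [Nat.sub_mul, tsub_le_iff_right]; omega
    have := (Nat.le_div_iff_mul_le hM).2 hvu
    omega
  have hcard := (card_image_of_injective F (ZMod.val_injective Q)).symm.trans_le (card_le_card hsub)
  rw [Nat.card_Ico, Nat.add_sub_cancel_left] at hcard
  calc M * #F ≤ M * (Q / M + 1) := Nat.mul_le_mul_left M hcard
    _ ≤ 2 * Q := by rw [mul_add, mul_one]; linarith [Nat.mul_div_le Q M]

lemma mul_card_bucket_eq_bucket_le [NeZero Q] (hM : 0 < M) (hMQ : M ≤ Q) :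
    M * #{q : ZMod Q × ZMod Q | bucket M q.1 = bucket M q.2} ≤ 2 * Q ^ 2 := by
  rw [card_filter, Fintype.sum_prod_type, mul_sum]
  calc ∑ x : ZMod Q, M * ∑ y : ZMod Q, (if bucket M x = bucket M y then 1 else 0)
      ≤ ∑ _x : ZMod Q, 2 * Q := sum_le_sum fun x _ => by
        simpa only [card_filter, eq_comm] using mul_card_bucket_eq_le hM hMQ (bucket M x)
    _ = 2 * Q ^ 2 := by rw [sum_const, card_univ, ZMod.card, smul_eq_mul, sq, mul_left_comm]

lemma mul_card_bucket_affine_eq_le [Fact Q.Prime] (hM : 0 < M) (hMQ : M ≤ Q) {a a' : ZMod Q}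
    (h : a ≠ a') :
    M * #{ω : ZMod Q × ZMod Q | bucket M (ω.1 * a + ω.2) = bucket M (ω.1 * a' + ω.2)}
      ≤ 2 * Q ^ 2 := by
  refine le_trans (Nat.mul_le_mul_left M ?_) (mul_card_bucket_eq_bucket_le hM hMQ)
  refine card_le_card_of_injOn (fun ω => (ω.1 * a + ω.2, ω.1 * a' + ω.2)) (by simp [Set.MapsTo]) ?_
  rintro ⟨l, t⟩ - ⟨l', t'⟩ - hω
  simp only [Prod.mk.injEq] at hω ⊢
  have hl : l = l' := by
    have : (l - l') * (a - a') = 0 := by linear_combination hω.1 - hω.2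
    exact sub_eq_zero.1 ((mul_eq_zero.1 this).resolve_right (sub_ne_zero.2 h))
  subst hl
  exact ⟨rfl, add_left_cancel hω.1⟩

end Bucket

def scramble {Q : ℕ} (ω : ZMod Q × ZMod Q) (a : ℕ) : ZMod Q := ω.1 * a + ω.2

lemma isAddFreimanHom_bucket_scramble {Q : ℕ} [NeZero Q] (M : ℕ) (ω : ZMod Q × ZMod Q) :
    IsAddFreimanHom 2 {a | InLowerHalf M (scramble ω a)} Set.univ
      fun a => (bucket M (scramble ω a) : ZMod M) := by
  refine isAddFreimanHom_two.2 ⟨Set.mapsTo_univ _ _, fun a ha b hb c hc d hd h => ?_⟩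
  rw [← Nat.cast_add, ← Nat.cast_add, ZMod.natCast_eq_natCast_iff]
  refine bucket_add_bucket_modEq ?_ ha hb hc hd
  have h' : (a : ZMod Q) + b = c + d := by exact_mod_cast congrArg (Nat.cast : ℕ → ZMod Q) h
  simp only [scramble]
  linear_combination ω.1 * h'

section Scramble

variable {Q M : ℕ} [Fact Q.Prime]

lemma le_four_mul_sum_sum_card_inLowerHalf (hM : (M : ZMod Q) ≠ 0) (A : Finset ℕ) :
    #A * Q ^ 4 ≤ 4 * ∑ ω₁ : ZMod Q × ZMod Q, ∑ ω₂ : ZMod Q × ZMod Q,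
      #{a ∈ A | InLowerHalf M (scramble ω₁ a) ∧ InLowerHalf M (scramble ω₂ a)} := by
  have hlow (a : ℕ) : Q ^ 2 ≤ 2 * #{ω : ZMod Q × ZMod Q | InLowerHalf M (scramble ω a)} := by
    rw [show #{ω : ZMod Q × ZMod Q | InLowerHalf M (scramble ω a)}
      = #{ω : ZMod Q × ZMod Q | InLowerHalf M (ω.1 * (a : ZMod Q) + ω.2)} from rfl,
      card_filter_affine, ZMod.card, sq, mul_left_comm]
    exact Nat.mul_le_mul_left Q (le_two_mul_card_inLowerHalf hM)
  rw [sum_sum_card_filter_and, mul_sum, ← smul_eq_mul, ← sum_const]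
  exact sum_le_sum fun a _ => by nlinarith [hlow a]

lemma sq_mul_sum_sum_card_bucket_collision_le (hM : 0 < M) (hMQ : M ≤ Q) {D : Finset (ℕ × ℕ)}
    (hD : ∀ q ∈ D, q.1 < q.2 ∧ q.2 < Q) :
    M ^ 2 * ∑ ω₁ : ZMod Q × ZMod Q, ∑ ω₂ : ZMod Q × ZMod Q, #{q ∈ D |
      bucket M (scramble ω₁ q.1) = bucket M (scramble ω₁ q.2) ∧
      bucket M (scramble ω₂ q.1) = bucket M (scramble ω₂ q.2)} ≤ 4 * Q ^ 4 * #D := by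
  rw [sum_sum_card_filter_and, mul_sum, mul_comm, ← smul_eq_mul, ← sum_const]
  refine sum_le_sum fun q hq => ?_
  have hq' : (q.1 : ZMod Q) ≠ q.2 := by
    rw [Ne, ZMod.natCast_eq_natCast_iff', Nat.mod_eq_of_lt ((hD q hq).1.trans (hD q hq).2),
      Nat.mod_eq_of_lt (hD q hq).2]
    exact (hD q hq).1.ne
  calc M ^ 2 * _ = _ := (mul_pow _ _ 2).symm
    _ ≤ (2 * Q ^ 2) ^ 2 := Nat.pow_le_pow_left (mul_card_bucket_affine_eq_le hM hMQ hq') 2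
    _ = 4 * Q ^ 4 := by ring

end Scramble

lemma exists_scramble_pair {Q p : ℕ} [Fact Q.Prime] (hp : 0 < p) (hpQ : p < Q) {A : Finset ℕ}
    (hAQ : ∀ a ∈ A, a < Q) (hA : 32 * #A ≤ p ^ 2) :
    ∃ ω₁ ω₂ : ZMod Q × ZMod Q,
      #A + 8 * #{q ∈ A ×ˢ A | q.1 < q.2 ∧
          bucket p (scramble ω₁ q.1) = bucket p (scramble ω₁ q.2) ∧
          bucket p (scramble ω₂ q.1) = bucket p (scramble ω₂ q.2)}
        ≤ 8 * #{a ∈ A | InLowerHalf p (scramble ω₁ a) ∧ InLowerHalf p (scramble ω₂ a)} := by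
  set D := {q ∈ A ×ˢ A | q.1 < q.2}
  have hD (q) (hq : q ∈ D) : q.1 < q.2 ∧ q.2 < Q := by
    simp only [D, mem_filter, mem_product] at hq
    exact ⟨hq.2, hAQ _ hq.1.2⟩
  have hDA : #D ≤ #A ^ 2 := (card_filter_le _ _).trans (by rw [card_product, sq])
  have hp' : (p : ZMod Q) ≠ 0 := by
    rw [Ne, ZMod.natCast_eq_zero_iff]
    exact fun h => (Nat.le_of_dvd hp h).not_gt hpQ
  have hlow := le_four_mul_sum_sum_card_inLowerHalf hp' A
  have hcoll := sq_mul_sum_sum_card_bucket_collision_le hp hpQ.le hD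
  simp only [D, filter_filter] at hcoll hDA
  have hSD : 8 * ∑ ω₁ : ZMod Q × ZMod Q, ∑ ω₂ : ZMod Q × ZMod Q, #{q ∈ A ×ˢ A | q.1 < q.2 ∧
      bucket p (scramble ω₁ q.1) = bucket p (scramble ω₁ q.2) ∧
      bucket p (scramble ω₂ q.1) = bucket p (scramble ω₂ q.2)} ≤ #A * Q ^ 4 := by
    refine Nat.le_of_mul_le_mul_left ?_ (pow_pos hp 2)
    calc p ^ 2 * (8 * _) = 8 * (p ^ 2 * _) := by ring
      _ ≤ 8 * (4 * Q ^ 4 * #A ^ 2) :=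
        Nat.mul_le_mul_left 8 (hcoll.trans (Nat.mul_le_mul_left _ hDA))
      _ = 32 * #A * (#A * Q ^ 4) := by ring
      _ ≤ p ^ 2 * (#A * Q ^ 4) := Nat.mul_le_mul_right _ hA
  have hsum : ∑ ω₁ : ZMod Q × ZMod Q, ∑ ω₂ : ZMod Q × ZMod Q, (#A + 8 * #{q ∈ A ×ˢ A |
      q.1 < q.2 ∧ bucket p (scramble ω₁ q.1) = bucket p (scramble ω₁ q.2) ∧
      bucket p (scramble ω₂ q.1) = bucket p (scramble ω₂ q.2)})
      ≤ ∑ ω₁ : ZMod Q × ZMod Q, ∑ ω₂ : ZMod Q × ZMod Q,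
        8 * #{a ∈ A | InLowerHalf p (scramble ω₁ a) ∧ InLowerHalf p (scramble ω₂ a)} := by
    simp only [sum_add_distrib, ← mul_sum, sum_const, card_univ, Fintype.card_prod, ZMod.card,
      smul_eq_mul]
    linarith
  obtain ⟨ω₁, -, h₁⟩ := exists_le_of_sum_le univ_nonempty hsum
  obtain ⟨ω₂, -, h₂⟩ := exists_le_of_sum_le univ_nonempty h₁
  exact ⟨ω₁, ω₂, h₂⟩

theorem exists_isSidon_subset_of_prime {p Q : ℕ} [Fact p.Prime] [Fact Q.Prime] (hp : p ≠ 2)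
    (hpQ : p < Q) {A : Finset ℕ} (hAQ : ∀ a ∈ A, a < Q) (hA : 32 * #A ≤ p ^ 2) :
    ∃ Z ⊆ A, IsSidon (Z : Set ℕ) ∧ #A ≤ 8 * p * #Z := by
  have hp0 : 0 < p := (Fact.out : p.Prime).pos
  obtain ⟨ω₁, ω₂, hω⟩ := exists_scramble_pair hp0 hpQ hAQ hA
  set G := {a ∈ A | InLowerHalf p (scramble ω₁ a) ∧ InLowerHalf p (scramble ω₂ a)}
  obtain ⟨W, hWG, hinj, hW⟩ := exists_subset_injOn_card_le G
    fun a => (bucket p (scramble ω₁ a), bucket p (scramble ω₂ a))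
  have hcoll : #{q ∈ G ×ˢ G | q.1 < q.2 ∧ (bucket p (scramble ω₁ q.1), bucket p (scramble ω₂ q.1))
      = (bucket p (scramble ω₁ q.2), bucket p (scramble ω₂ q.2))}
      ≤ #{q ∈ A ×ˢ A | q.1 < q.2 ∧ bucket p (scramble ω₁ q.1) = bucket p (scramble ω₁ q.2) ∧
          bucket p (scramble ω₂ q.1) = bucket p (scramble ω₂ q.2)} := by
    refine card_le_card fun q hq => ?_
    simp only [G, mem_filter, mem_product, Prod.mk.injEq] at hq ⊢
    exact ⟨⟨hq.1.1.1, hq.1.2.1⟩, hq.2⟩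
  have hWlow (a) (ha : a ∈ W) : InLowerHalf p (scramble ω₁ a) ∧ InLowerHalf p (scramble ω₂ a) :=
    (mem_filter.1 (hWG ha)).2
  have hφ : IsAddFreimanHom 2 (W : Set ℕ) Set.univ
      fun a => ((bucket p (scramble ω₁ a) : ZMod p), (bucket p (scramble ω₂ a) : ZMod p)) := by
    rw [← Set.univ_prod_univ]
    exact ((isAddFreimanHom_bucket_scramble p ω₁).subset (fun a ha => (hWlow a ha).1)
      (Set.mapsTo_univ _ _)).prodMk ((isAddFreimanHom_bucket_scramble p ω₂).subset
      (fun a ha => (hWlow a ha).2) (Set.mapsTo_univ _ _))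
  have hφinj : Set.InjOn (fun a => ((bucket p (scramble ω₁ a) : ZMod p),
      (bucket p (scramble ω₂ a) : ZMod p))) W := by
    intro a ha b hb h
    simp only [Prod.mk.injEq, ZMod.natCast_eq_natCast_iff', Nat.mod_eq_of_lt (bucket_lt hp0 _)] at h
    exact hinj ha hb (Prod.ext h.1 h.2)
  have h2 : (2 : ZMod p) ≠ 0 := by
    rw [Ne, ← Nat.cast_ofNat, ZMod.natCast_eq_zero_iff]
    exact fun h => hp ((Nat.prime_dvd_prime_iff_eq Fact.out Nat.prime_two).1 h)
  obtain ⟨Z, hZW, hZ, hWZ⟩ := exists_isSidon_subset_of_isAddFreimanHom h2 hφ hφinj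
  refine ⟨Z, hZW.trans (hWG.trans (filter_subset _ _)), hZ, ?_⟩
  rw [ZMod.card] at hWZ
  calc #A ≤ 8 * #W := by omega
    _ ≤ 8 * (p * #Z) := Nat.mul_le_mul_left 8 hWZ
    _ = 8 * p * #Z := (mul_assoc _ _ _).symm

theorem exists_isSidon_subset (A : Finset ℕ) :
    ∃ Z ⊆ A, IsSidon (Z : Set ℕ) ∧ #A ≤ 192 ^ 2 * #Z ^ 2 := by
  set s := Nat.sqrt #A
  obtain ⟨p, hp, hsp, hps⟩ := Nat.bertrand (6 * (s + 1)) (by omega)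
  obtain ⟨Q, hQ, hQp⟩ := Nat.exists_infinite_primes (p + A.sup id + 1)
  have := Fact.mk hp
  have := Fact.mk hQp
  have hAQ (a) (ha : a ∈ A) : a < Q := by
    have : a ≤ A.sup id := le_sup (f := id) ha
    omega
  have hAp : 32 * #A ≤ p ^ 2 := by
    have := Nat.lt_succ_sqrt' #A
    nlinarith
  obtain ⟨Z, hZA, hZ, hcard⟩ :=
    exists_isSidon_subset_of_prime (p := p) (Q := Q) (by omega) (by omega) hAQ hAp
  refine ⟨Z, hZA, hZ, ?_⟩
  rcases Nat.eq_zero_or_pos #A with h0 | hpos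
  · simp [h0]
  have hs : 1 ≤ s := Nat.le_sqrt.2 (by omega)
  have h1 : #A ≤ 192 * s * #Z := by nlinarith
  have h2 : #A * #A ≤ 192 ^ 2 * #Z ^ 2 * #A := calc
    #A * #A ≤ (192 * s * #Z) ^ 2 := by nlinarith
    _ = 192 ^ 2 * #Z ^ 2 * s ^ 2 := by ring
    _ ≤ 192 ^ 2 * #Z ^ 2 * #A := Nat.mul_le_mul_left _ (Nat.sqrt_le' _)
  exact Nat.le_of_mul_le_mul_right h2 hpos

lemma hammingDist_add_right {ι β : Type*} [Fintype ι] [DecidableEq β] [AddGroup β]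
    (x y t : ι → β) : hammingDist (x + t) (y + t) = hammingDist x y :=
  hammingDist_comp (fun i b => b + t i) fun i => add_left_injective (t i)

def chainPoint {β : Type*} [Zero β] [One β] (n k : ℕ) : Fin n → β :=
  fun i => if (i : ℕ) < k then 1 else 0

lemma hammingDist_chainPoint {β : Type*} [Zero β] [One β] [NeZero (1 : β)] [DecidableEq β]
    {n k l : ℕ} (hk : k ≤ n) (hl : l ≤ n) :
    hammingDist (chainPoint n k : Fin n → β) (chainPoint n l) = Nat.dist k l := by
  wlog hkl : k ≤ l generalizing k l
  · rw [hammingDist_comm, Nat.dist_comm]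
    exact this hl hk (by omega)
  have hfilter : univ.filter (fun i : Fin n => chainPoint n k i ≠ (chainPoint n l i : β))
      = univ.filter (fun i : Fin n => (i : ℕ) < l) \
        univ.filter (fun i : Fin n => (i : ℕ) < k) := by
    ext i
    simp only [mem_filter, mem_univ, true_and, mem_sdiff]
    unfold chainPoint
    split_ifs <;> simp <;> omega
  rw [hammingDist, hfilter, card_sdiff_of_subset, Fin.card_filter_val_lt, Fin.card_filter_val_lt,
    Nat.dist_eq_sub_of_le hkl]
  · omega
  · intro i; simp only [mem_filter, mem_univ, true_and]; omega

lemma exists_translate_card_le {G ι : Type*} [AddGroup G] [Fintype G] [DecidableEq G]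
    (K : Finset ι) (f : ι → G) (S : Finset G) :
    ∃ t, #K * #S ≤ Fintype.card G * #{k ∈ K | f k + t ∈ S} :=
  exists_card_mul_le_card_mul_card_filter K (fun t k => f k + t ∈ S) fun k _ =>
    (card_equiv (Equiv.addLeft (f k)) (by simp)).ge

lemma IsSidon.isRainbow_image {β : Type*} [DecidableEq β] {n : ℕ} {Z : Finset ℕ}
    (hZ : IsSidon (Z : Set ℕ)) {f : ℕ → Fin n → β}
    (hf : ∀ k ∈ Z, ∀ l ∈ Z, hammingDist (f k) (f l) = Nat.dist k l) :
    IsRainbow (Z.image f) := by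
  simp only [IsRainbow, mem_image]
  rintro _ ⟨k, hk, rfl⟩ _ ⟨l, hl, rfl⟩ _ ⟨a, ha, rfl⟩ _ ⟨b, hb, rfl⟩ hkl hab h
  rw [hf k hk l hl, hf a ha b hb] at h
  have hkl : k ≠ l := fun h => hkl (by rw [h])
  have hab : a ≠ b := fun h => hab (by rw [h])
  rcases (by unfold Nat.dist at h; omega : k + a = l + b ∨ k + b = l + a) with hs | hs
  · rcases hZ hk ha hl hb hs with ⟨rfl, -⟩ | ⟨rfl, rfl⟩
    · exact absurd rfl hkl
    · exact pair_comm _ _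
  · rcases hZ hk hb hl ha hs with ⟨rfl, -⟩ | ⟨rfl, rfl⟩
    · exact absurd rfl hkl
    · rfl

lemma IsSidon.isRainbow_image_chainPoint_add {β : Type*} [AddGroup β] [One β] [NeZero (1 : β)]
    [DecidableEq β] {n : ℕ} {Z : Finset ℕ} (hZ : IsSidon (Z : Set ℕ)) (hZn : ∀ k ∈ Z, k ≤ n)
    (t : Fin n → β) :
    IsRainbow (Z.image (chainPoint n · + t)) ∧ #(Z.image (chainPoint n · + t)) = #Z := by
  have hdist (k) (hk : k ∈ Z) (l) (hl : l ∈ Z) :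
      hammingDist (chainPoint n k + t) (chainPoint n l + t) = Nat.dist k l := by
    rw [hammingDist_add_right, hammingDist_chainPoint (hZn k hk) (hZn l hl)]
  refine ⟨hZ.isRainbow_image hdist, card_image_of_injOn fun k hk l hl h => ?_⟩
  exact Nat.eq_of_dist_eq_zero (by rw [← hdist k hk l hl, h, hammingDist_self])

/-- there is an absolute constant `c > 0` such that for every `n`,
every `0 < α ≤ 1` and every `S ⊆ 𝔽₂ⁿ` with `|S| ≥ α 2ⁿ`, the set `S` contains a
rainbow subset `R` with `|R| ≥ c √(α n)`. -/
theorem stmt19 :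
    ∃ c : ℝ, 0 < c ∧ ∀ n : ℕ, ∀ α : ℝ, 0 < α → α ≤ 1 →
      ∀ S : Finset (Fin n → ZMod 2), α * 2 ^ n ≤ (S.card : ℝ) →
        ∃ R ⊆ S, IsRainbow R ∧ c * Real.sqrt (α * n) ≤ (R.card : ℝ) := by
  refine ⟨1 / 192, by norm_num, fun n α hα _ S hS => ?_⟩
  obtain ⟨t, ht⟩ := exists_translate_card_le (range (n + 1)) (chainPoint n) S
  set A := {k ∈ range (n + 1) | chainPoint n k + t ∈ S}
  obtain ⟨Z, hZA, hZ, hZcard⟩ := exists_isSidon_subset A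
  obtain ⟨hR, hRcard⟩ := hZ.isRainbow_image_chainPoint_add
    (fun k hk => mem_range_succ_iff.1 (mem_filter.1 (hZA hk)).1) t
  refine ⟨_, fun x hx => ?_, hR, ?_⟩
  · obtain ⟨k, hk, rfl⟩ := mem_image.1 hx
    exact (mem_filter.1 (hZA hk)).2
  have hαA : α * (n + 1) ≤ #A := by
    rw [card_range, Fintype.card_fun, ZMod.card, Fintype.card_fin] at ht
    have ht' : ((n + 1 : ℕ) : ℝ) * #S ≤ 2 ^ n * #A := by exact_mod_cast ht
    push_cast at ht'
    nlinarith [pow_pos (two_pos : (0 : ℝ) < 2) n]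
  have hAZ : (#A : ℝ) ≤ (192 * #Z) ^ 2 := by
    rw [mul_pow]
    exact_mod_cast hZcard
  have : Real.sqrt (α * n) ≤ 192 * #Z := Real.sqrt_le_iff.2 ⟨by positivity, by nlinarith⟩
  rw [hRcard]
  linarith
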